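/- arXiv:2008.02381 — 6 statements merged into one kernel-verified Lean document; each statement's English description precedes it below -/
import Mathlib

section
/- Define the sequence n_i = 2^(2^i) for i ≥ 0 (so n_0 = 2 and n_{i+1} = n_i²), and define the step function f : ℕ → ℝ by f(x) = n_{2i} for n_{2i} ≤ x < n_{2i+1}, f(x) = n_{2i+2} for n_{2i+1} ≤ x < n_{2i+2} (with f(x) = 2 for x < 2, say). Then 𝔦 ⪯₁ f fails: there are no positive integers K, M, N with x ≤ K·f(M·x) for all x ≥ N. -/
/-!
On `[n_{2i}, n_{2i+1}) = [2^A, 2^(2A))` with `A = 2^(2i)`, the function `f` stays at `2^A`, the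
square root of the right endpoint. Taking `x` a power of two with `M * x` just below `2^(2A)`
gives `x ≈ 2^(2A) / M`, which beats `K * 2^A = K * f (M * x)` once `A` is large.
-/

lemma mul_two_pow_lt_two_pow_add (n m : ℕ) : n * 2 ^ m < 2 ^ (n + m) := by
  rw [pow_add]
  exact Nat.mul_lt_mul_of_pos_right Nat.lt_two_pow_self (by positivity)

lemma exists_lt_mul_mem_Ico_two_pow {K M A : ℕ} (hM : 0 < M) (hA : K + M < A) :
    ∃ x : ℕ, K * 2 ^ A < x ∧ 2 ^ A ≤ M * x ∧ M * x < 2 ^ (2 * A) := by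
  refine ⟨2 ^ (2 * A - 1 - M), ?_, ?_, ?_⟩
  · calc K * 2 ^ A < 2 ^ (K + A) := mul_two_pow_lt_two_pow_add K A
      _ ≤ 2 ^ (2 * A - 1 - M) := Nat.pow_le_pow_right two_pos (by omega)
  · calc 2 ^ A ≤ 2 ^ (2 * A - 1 - M) := Nat.pow_le_pow_right two_pos (by omega)
      _ ≤ M * 2 ^ (2 * A - 1 - M) := Nat.le_mul_of_pos_left _ hM
  · calc M * 2 ^ (2 * A - 1 - M) < 2 ^ (M + (2 * A - 1 - M)) := mul_two_pow_lt_two_pow_add _ _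
      _ ≤ 2 ^ (2 * A) := Nat.pow_le_pow_right two_pos (by omega)

theorem stmt_5_general (f : ℕ → ℝ)
    (h1 : ∀ i x : ℕ, 2 ^ 2 ^ (2 * i) ≤ x → x < 2 ^ 2 ^ (2 * i + 1) →
      f x = ((2 ^ 2 ^ (2 * i) : ℕ) : ℝ)) :
    ¬ ∃ K M N : ℕ, 0 < K ∧ 0 < M ∧ 0 < N ∧
      ∀ x : ℕ, x ≥ N → (x : ℝ) ≤ (K : ℝ) * f (M * x) := by
  rintro ⟨K, M, N, hK, hM, -, h⟩
  set i := K + M + N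
  have hA : 2 * i < 2 ^ (2 * i) := Nat.lt_two_pow_self
  obtain ⟨x, hKx, hlow, hhigh⟩ :=
    exists_lt_mul_mem_Ico_two_pow (K := K) (A := 2 ^ (2 * i)) hM (by omega)
  have hxN : N ≤ x :=
    calc N ≤ 2 ^ (2 * i) := by omega
      _ ≤ 2 ^ 2 ^ (2 * i) := Nat.lt_two_pow_self.le
      _ ≤ K * 2 ^ 2 ^ (2 * i) := Nat.le_mul_of_pos_left _ hK
      _ ≤ x := hKx.le
  have hfx : f (M * x) = ((2 ^ 2 ^ (2 * i) : ℕ) : ℝ) :=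
    h1 i _ hlow (by rwa [pow_succ, mul_comm _ 2])
  have hle := h x hxN
  rw [hfx] at hle
  exact absurd (by exact_mod_cast hle) hKx.not_ge

theorem stmt_5 (f : ℕ → ℝ)
    (h0 : ∀ x : ℕ, x < 2 → f x = 2)
    (h1 : ∀ i x : ℕ, 2 ^ 2 ^ (2 * i) ≤ x → x < 2 ^ 2 ^ (2 * i + 1) →
      f x = ((2 ^ 2 ^ (2 * i) : ℕ) : ℝ))
    (h2 : ∀ i x : ℕ, 2 ^ 2 ^ (2 * i + 1) ≤ x → x < 2 ^ 2 ^ (2 * i + 2) →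
      f x = ((2 ^ 2 ^ (2 * i + 2) : ℕ) : ℝ)) :
    ¬ ∃ K M N : ℕ, 0 < K ∧ 0 < M ∧ 0 < N ∧
      ∀ x : ℕ, x ≥ N → (x : ℝ) ≤ (K : ℝ) * f (M * x) :=
  stmt_5_general f h1
end

section
/- A function f ∈ 𝓕 is super-quadratic if and only if (n ↦ n²) ≪ f; that is, for every constant M > 0 the inequality f(n) ≤ M·n² holds for at most finitely many n ∈ ℕ if and only if there exists an unbounded t ∈ 𝓕 such that (n ↦ n²·t(n)) ⪯₁ f. -/
/-- `g ⪯₁ f`: there exist positive integers `K, M, N` such that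
`g n ≤ K * f (M * n)` for every `n ≥ N`. -/
def Preceq1 (g f : ℕ → ℝ) : Prop :=
  ∃ K M N : ℕ, 0 < K ∧ 0 < M ∧ 0 < N ∧ ∀ n ≥ N, g n ≤ (K : ℝ) * f (M * n)

/-- `f ≪ g`: there is an unbounded `t ∈ 𝓕` with `(f · t) ⪯₁ g`. -/
def LL (f g : ℕ → ℝ) : Prop :=
  ∃ t : ℕ → ℝ, Monotone t ∧ (∀ n, 0 ≤ t n) ∧ (∀ C : ℝ, ∃ n, C < t n) ∧
    Preceq1 (fun n => f n * t n) g

theorem stmt_7 (f : ℕ → ℝ) (hfmono : Monotone f) (hfnonneg : ∀ n, 0 ≤ f n) :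
    (∀ M : ℝ, 0 < M → {n : ℕ | f n ≤ M * (n : ℝ) ^ 2}.Finite) ↔
      LL (fun n : ℕ => (n : ℝ) ^ 2) f := by
  constructor
  · intro h
    set S : ℕ → Set ℝ := fun n => (fun m : ℕ => f m / (m : ℝ) ^ 2) '' {m | max n 1 ≤ m}
      with hS
    have hne : ∀ n, (S n).Nonempty := fun n => ⟨_, ⟨max n 1, by exact Nat.le_refl _, rfl⟩⟩
    have hbdd : ∀ n, BddBelow (S n) := by
      intro n
      refine ⟨0, ?_⟩
      rintro x ⟨m, hm, rfl⟩
      have := hfnonneg m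
      positivity
    set t : ℕ → ℝ := fun n => sInf (S n) with ht
    refine ⟨t, ?_, ?_, ?_, 1, 1, 1, one_pos, one_pos, one_pos, ?_⟩
    · intro a b hab
      apply csInf_le_csInf (hbdd a) (hne b)
      rintro x ⟨m, hm, rfl⟩
      refine ⟨m, ?_, rfl⟩
      simp only [Set.mem_setOf_eq] at hm ⊢
      omega
    · intro n
      apply le_csInf (hne n)
      rintro x ⟨m, hm, rfl⟩
      have := hfnonneg m
      positivity
    · intro C
      obtain ⟨N₀, hN₀⟩ := (h (max C 0 + 1) (by positivity)).bddAbove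
      refine ⟨N₀ + 1, ?_⟩
      have hge : max C 0 + 1 ≤ t (N₀ + 1) := by
        apply le_csInf (hne _)
        rintro x ⟨m, hm, rfl⟩
        simp only [Set.mem_setOf_eq] at hm
        have hm1 : N₀ + 1 ≤ m := by omega
        have hmpos : (0 : ℝ) < (m : ℝ) ^ 2 := by
          have : (1 : ℝ) ≤ (m : ℝ) := by exact_mod_cast Nat.one_le_iff_ne_zero.mpr (by omega)
          nlinarith
        have hnotin : ¬ (f m ≤ (max C 0 + 1) * (m : ℝ) ^ 2) := by
          intro hc
          have := hN₀ hc
          omega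
        rw [le_div_iff₀ hmpos]
        push_neg at hnotin
        linarith
      have := le_max_left C 0
      linarith
    · intro n hn
      have hmem : f n / (n : ℝ) ^ 2 ∈ S n := ⟨n, by simp only [Set.mem_setOf_eq]; omega, rfl⟩
      have hle := csInf_le (hbdd n) hmem
      have hnpos : (0 : ℝ) < (n : ℝ) ^ 2 := by
        have : (1 : ℝ) ≤ (n : ℝ) := by exact_mod_cast hn
        nlinarith
      have h0 : 0 ≤ t n := by
        apply le_csInf (hne n)
        rintro x ⟨m, hm, rfl⟩
        have := hfnonneg m
        positivity
      simp only [Nat.cast_one, one_mul]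
      calc (n : ℝ) ^ 2 * t n ≤ (n : ℝ) ^ 2 * (f n / (n : ℝ) ^ 2) := by nlinarith
        _ = f n := by field_simp
  · rintro ⟨t, hmt, htnn, hunb, K, M, N, hK, hM, hN, hle⟩ C hC
    obtain ⟨n₀, hn₀⟩ := hunb (4 * C * K * (M : ℝ) ^ 2)
    set n₁ := max n₀ (max N 1) with hn₁
    have ht1 : 4 * C * (K : ℝ) * (M : ℝ) ^ 2 < t n₁ :=
      lt_of_lt_of_le hn₀ (hmt (le_max_left _ _))
    apply Set.Finite.subset (Set.finite_Iio (2 * M * n₁))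
    intro m hm
    simp only [Set.mem_setOf_eq] at hm
    simp only [Set.mem_Iio]
    by_contra hge
    push_neg at hge
    set n := m / M with hn'
    have hmod : M * n + m % M = m := by rw [hn']; exact Nat.div_add_mod m M
    have hmlt := Nat.mod_lt m hM
    have hMn : M * n ≤ m := by omega
    have hmub : m < M * n + M := by omega
    have hnge : 2 * n₁ ≤ n := by
      rw [hn', Nat.le_div_iff_mul_le hM]
      have : 2 * n₁ * M = 2 * M * n₁ := by ring
      omega
    have hn1pos : 1 ≤ n₁ := le_trans (le_max_right N 1) (le_max_right _ _)
    have hnN : N ≤ n := by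
      have : N ≤ n₁ := le_trans (le_max_left N 1) (le_max_right _ _)
      omega
    have hn1 : 1 ≤ n := by omega
    have h1 : (n : ℝ) ^ 2 * t n ≤ (K : ℝ) * f (M * n) := hle n hnN
    have h2 : f (M * n) ≤ f m := hfmono hMn
    have h3 : t n₁ ≤ t n := hmt (by omega)
    have hmr : (m : ℝ) < 2 * (M : ℝ) * (n : ℝ) := by
      have c1 : (m : ℝ) < (M : ℝ) * (n : ℝ) + (M : ℝ) := by exact_mod_cast hmub
      have c2 : (M : ℝ) ≤ (M : ℝ) * (n : ℝ) := by
        have e1 : (1 : ℝ) ≤ (n : ℝ) := by exact_mod_cast hn1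
        have e2 : (0 : ℝ) < (M : ℝ) := by exact_mod_cast hM
        nlinarith
      linarith
    have han : (1 : ℝ) ≤ (n : ℝ) := by exact_mod_cast hn1
    have hKpos : (0 : ℝ) < (K : ℝ) := by exact_mod_cast hK
    have hMpos : (0 : ℝ) < (M : ℝ) := by exact_mod_cast hM
    have hm0 : (0 : ℝ) ≤ (m : ℝ) := Nat.cast_nonneg m
    have hfm : 0 ≤ f m := hfnonneg m
    have ha2 : (0 : ℝ) < (n : ℝ) ^ 2 := by nlinarith
    have e1 : (K : ℝ) * f m ≤ (K : ℝ) * (C * (m : ℝ) ^ 2) :=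
      mul_le_mul_of_nonneg_left hm hKpos.le
    have msq : (m : ℝ) ^ 2 < (2 * (M : ℝ) * (n : ℝ)) ^ 2 := by nlinarith
    have e2 : (K : ℝ) * C * (m : ℝ) ^ 2 < (K : ℝ) * C * (2 * (M : ℝ) * (n : ℝ)) ^ 2 :=
      mul_lt_mul_of_pos_left msq (mul_pos hKpos hC)
    have e2' : (K : ℝ) * C * (2 * (M : ℝ) * (n : ℝ)) ^ 2
        = 4 * C * (K : ℝ) * (M : ℝ) ^ 2 * (n : ℝ) ^ 2 := by ring
    have e3 : 4 * C * (K : ℝ) * (M : ℝ) ^ 2 * (n : ℝ) ^ 2 < t n₁ * (n : ℝ) ^ 2 :=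
      mul_lt_mul_of_pos_right ht1 ha2
    have e4 : t n₁ * (n : ℝ) ^ 2 ≤ t n * (n : ℝ) ^ 2 :=
      mul_le_mul_of_nonneg_right h3 ha2.le
    have e6 : (K : ℝ) * f (M * n) ≤ (K : ℝ) * f m :=
      mul_le_mul_of_nonneg_left h2 hKpos.le
    linarith [e1, e2, e3, e4, h1, e6, e2'.le, e2'.ge]
end

section
/- Let c, d be real numbers with 0 < c < d and let f ∈ 𝓕. Then (n ↦ n^c·f(n)) ≪ f if and only if (n ↦ n^d·f(n)) ≪ f (here n^c denotes the real power (n : ℝ)^c). -/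
/-!
If `n^c t(n) f(n) ≤ K f(M n)` with `t` unbounded, then applying this bound `j` times along
`n, M n, M² n, …` (where `n^c t(n)` only grows) gives `(n^c t(n))^j f(n) ≤ K^j f(M^j n)`.
For `c j ≥ d` the left side dominates `n^d t(n)^j f(n)`, and `t^j` is again unbounded, so
`n^d f ≪ f`. The converse holds because `n^c ≤ n^d` for `n ≥ 1`.
-/

open Filter

theorem Preceq1.mono_left {g h f : ℕ → ℝ} (hgh : ∀ᶠ n in atTop, g n ≤ h n)
    (hhf : Preceq1 h f) : Preceq1 g f := by
  obtain ⟨K, M, N, hK, hM, hN, hbound⟩ := hhf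
  obtain ⟨N', hN'⟩ := eventually_atTop.mp hgh
  exact ⟨K, M, max N N', hK, hM, hN.trans_le (le_max_left _ _), fun n hn =>
    (hN' n (le_of_max_le_right hn)).trans (hbound n (le_of_max_le_left hn))⟩

theorem LL.mono_left {g h f : ℕ → ℝ} (hgh : ∀ᶠ n in atTop, g n ≤ h n) (hhf : LL h f) :
    LL g f := by
  obtain ⟨t, ht, ht0, htub, hp⟩ := hhf
  exact ⟨t, ht, ht0, htub,
    hp.mono_left (hgh.mono fun n hn => mul_le_mul_of_nonneg_right hn (ht0 n))⟩

theorem Preceq1.pow_mul_of_mul {g f : ℕ → ℝ} (hg : Monotone g) (hg0 : ∀ n, 0 ≤ g n)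
    (hf0 : ∀ n, 0 ≤ f n) (h : Preceq1 (fun n => g n * f n) f) (j : ℕ) :
    Preceq1 (fun n => g n ^ j * f n) f := by
  obtain ⟨K, M, N, hK, hM, hN, hbound⟩ := h
  refine ⟨K ^ j, M ^ j, N, pow_pos hK j, pow_pos hM j, hN, ?_⟩
  induction j with
  | zero => intro n _; simp
  | succ j ih =>
    intro n hn
    have hnm : n ≤ M ^ j * n := Nat.le_mul_of_pos_left n (pow_pos hM j)
    calc g n ^ (j + 1) * f n = g n * (g n ^ j * f n) := by ring
      _ ≤ g (M ^ j * n) * ((K ^ j : ℕ) * f (M ^ j * n)) :=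
          mul_le_mul (hg hnm) (ih n hn) (mul_nonneg (pow_nonneg (hg0 n) j) (hf0 n))
            (hg0 _)
      _ = (K ^ j : ℕ) * (g (M ^ j * n) * f (M ^ j * n)) := by ring
      _ ≤ (K ^ j : ℕ) * (K * f (M * (M ^ j * n))) :=
          mul_le_mul_of_nonneg_left (hbound _ (hn.trans hnm)) (by positivity)
      _ = (K ^ (j + 1) : ℕ) * f (M ^ (j + 1) * n) := by push_cast; ring_nf

theorem exists_lt_pow_of_forall_exists_lt {t : ℕ → ℝ} (ht : ∀ C : ℝ, ∃ n, C < t n) {j : ℕ}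
    (hj : j ≠ 0) (C : ℝ) : ∃ n, C < t n ^ j := by
  obtain ⟨n, hn⟩ := ht (max C 1)
  exact ⟨n, (le_max_left C 1).trans_lt
    (hn.trans_le (le_self_pow₀ ((le_max_right C 1).trans hn.le) hj))⟩

theorem LL.rpow_mul_of_rpow_mul {c : ℝ} (hc : 0 < c) (d : ℝ) {f : ℕ → ℝ}
    (hf0 : ∀ n, 0 ≤ f n) (h : LL (fun n : ℕ => (n : ℝ) ^ c * f n) f) :
    LL (fun n : ℕ => (n : ℝ) ^ d * f n) f := by
  obtain ⟨t, ht, ht0, htub, hp⟩ := h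
  obtain ⟨j, hj⟩ := exists_nat_ge (max d 1 / c)
  have hdj : max d 1 ≤ c * j := by rwa [div_le_iff₀ hc, mul_comm] at hj
  have hj0 : j ≠ 0 := by
    rintro rfl
    norm_num at hdj
  have hg : Monotone fun n : ℕ => (n : ℝ) ^ c * t n := fun a b hab =>
    mul_le_mul (Real.rpow_le_rpow (Nat.cast_nonneg a) (Nat.cast_le.mpr hab) hc.le) (ht hab)
      (ht0 a) (by positivity)
  have hg0 : ∀ n : ℕ, 0 ≤ (n : ℝ) ^ c * t n := fun n => mul_nonneg (by positivity) (ht0 n)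
  have hgf : Preceq1 (fun n => ((n : ℝ) ^ c * t n) * f n) f := by
    convert hp using 2 with n; ring
  refine ⟨fun n => t n ^ j, fun a b hab => pow_le_pow_left₀ (ht0 a) (ht hab) j,
    fun n => pow_nonneg (ht0 n) j, exists_lt_pow_of_forall_exists_lt htub hj0,
    (hgf.pow_mul_of_mul hg hg0 hf0 j).mono_left ?_⟩
  filter_upwards [eventually_ge_atTop 1] with n hn
  have hn1 : (1 : ℝ) ≤ n := Nat.one_le_cast.mpr hn
  have hnd : (n : ℝ) ^ d ≤ ((n : ℝ) ^ c) ^ j := by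
    rw [← Real.rpow_mul_natCast (Nat.cast_nonneg n)]
    exact Real.rpow_le_rpow_of_exponent_le hn1 ((le_max_left d 1).trans hdj)
  calc (n : ℝ) ^ d * f n * t n ^ j ≤ ((n : ℝ) ^ c) ^ j * f n * t n ^ j :=
        mul_le_mul_of_nonneg_right (mul_le_mul_of_nonneg_right hnd (hf0 n))
          (pow_nonneg (ht0 n) j)
    _ = ((n : ℝ) ^ c * t n) ^ j * f n := by ring

theorem stmt_8_general (c d : ℝ) (hc : 0 < c) (hcd : c < d)
    (f : ℕ → ℝ) (hfnonneg : ∀ n, 0 ≤ f n) :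
    LL (fun n : ℕ => (n : ℝ) ^ c * f n) f ↔ LL (fun n : ℕ => (n : ℝ) ^ d * f n) f := by
  refine ⟨LL.rpow_mul_of_rpow_mul hc d hfnonneg, LL.mono_left ?_⟩
  filter_upwards [eventually_ge_atTop 1] with n hn
  exact mul_le_mul_of_nonneg_right
    (Real.rpow_le_rpow_of_exponent_le (Nat.one_le_cast.mpr hn) hcd.le) (hfnonneg n)

theorem stmt_8 (c d : ℝ) (hc : 0 < c) (hcd : c < d)
    (f : ℕ → ℝ) (hfmono : Monotone f) (hfnonneg : ∀ n, 0 ≤ f n) :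
    LL (fun n : ℕ => (n : ℝ) ^ c * f n) f ↔ LL (fun n : ℕ => (n : ℝ) ^ d * f n) f :=
  stmt_8_general c d hc hcd f hfnonneg
end

section
/- Let α > 1 be a real number and define f_α(n) = α^((log n)^(3/2)) for natural numbers n ≥ 1 (with f_α(0) = 0, say, where log is the natural logarithm). Then f_α is not strongly-super-polynomial: there is no unbounded t ∈ 𝓕 and positive integers K, M, N such that n²·f_α(n)·t(n) ≤ K·f_α(M·n) for all n ≥ N. -/
/-!
Write `L = log n` and `c = log M`. Then `log f(Mn) - log f(n) = log α · ((c + L)^{3/2} - L^{3/2})`,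
and by the mean value theorem this is `O(√L) = o(L)`. Hence `f(Mn) ≤ n² f(n)` for all large `n`,
so `n² f(n) t(n) ≤ K f(Mn)` forces `t(n) ≤ K` for all large `n`, contradicting unboundedness of `t`.
-/

open Filter Real

lemma rpow_three_halves_eq_mul_sqrt {x : ℝ} (hx : 0 ≤ x) : x ^ ((3 : ℝ) / 2) = x * √x := by
  rw [show (3 : ℝ) / 2 = 1 + 1 / 2 by norm_num, rpow_add' hx (by norm_num), rpow_one,
    sqrt_eq_rpow]

lemma add_rpow_three_halves_le {c L : ℝ} (hc : 0 ≤ c) (hL : 0 ≤ L) :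
    (c + L) ^ ((3 : ℝ) / 2) ≤ L ^ ((3 : ℝ) / 2) + 3 / 2 * c * √(c + L) := by
  rw [rpow_three_halves_eq_mul_sqrt (by linarith), rpow_three_halves_eq_mul_sqrt hL]
  have hba : √L ≤ √(c + L) := sqrt_le_sqrt (by linarith)
  set a := √(c + L)
  set b := √L
  have hcL : c + L = a ^ 2 := (sq_sqrt (by linarith)).symm
  have hL' : L = b ^ 2 := (sq_sqrt hL).symm
  rw [hcL, show c = a ^ 2 - b ^ 2 by linarith, hL']
  have hb : 0 ≤ b := sqrt_nonneg L
  -- the right side minus the left side is `(a - b)² (a + 2b) / 2`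
  nlinarith [mul_nonneg (sq_nonneg (a - b)) (by linarith : 0 ≤ a + 2 * b)]

lemma eventually_add_rpow_three_halves_le {c ε : ℝ} (hc : 0 ≤ c) (hε : 0 < ε) :
    ∀ᶠ L in atTop, (c + L) ^ ((3 : ℝ) / 2) ≤ L ^ ((3 : ℝ) / 2) + ε * L := by
  filter_upwards [eventually_ge_atTop c, eventually_ge_atTop ((3 * c / ε) ^ 2)] with L hcL hL
  have hL0 : 0 ≤ L := le_trans (sq_nonneg _) hL
  have hsqrt : √(c + L) ≤ 2 * √L := by
    rw [show 2 * √L = √(2 ^ 2 * L) by rw [sqrt_mul (by norm_num), sqrt_sq zero_le_two]]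
    exact sqrt_le_sqrt (by linarith)
  have hcε : 3 * c ≤ ε * √L := by
    rw [← div_le_iff₀' hε]
    exact le_sqrt_of_sq_le hL
  calc (c + L) ^ ((3 : ℝ) / 2) ≤ L ^ ((3 : ℝ) / 2) + 3 / 2 * c * √(c + L) :=
        add_rpow_three_halves_le hc hL0
    _ ≤ L ^ ((3 : ℝ) / 2) + 3 * c * √L := by linarith [mul_le_mul_of_nonneg_left hsqrt hc]
    _ ≤ L ^ ((3 : ℝ) / 2) + ε * √L * √L := by gcongr
    _ = L ^ ((3 : ℝ) / 2) + ε * L := by rw [mul_assoc, mul_self_sqrt hL0]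

lemma eventually_rpow_log_mul_le {α : ℝ} (hα : 1 < α) {M : ℕ} (hM : 0 < M) :
    ∀ᶠ n : ℕ in atTop, α ^ (log ((M * n : ℕ) : ℝ)) ^ ((3 : ℝ) / 2) ≤
      (n : ℝ) ^ 2 * α ^ (log n) ^ ((3 : ℝ) / 2) := by
  have hlα : 0 < log α := log_pos hα
  have hlog : Tendsto (fun n : ℕ => log n) atTop atTop :=
    tendsto_log_atTop.comp tendsto_natCast_atTop_atTop
  filter_upwards [eventually_ge_atTop 1, hlog.eventually
    (eventually_add_rpow_three_halves_le (log_natCast_nonneg M) (div_pos two_pos hlα))]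
    with n hn hgrowth
  have hn0 : (0 : ℝ) < n := by exact_mod_cast hn
  have hα0 : 0 < α := by linarith
  rw [Nat.cast_mul, log_mul (by exact_mod_cast hM.ne') hn0.ne', rpow_def_of_pos hα0,
    rpow_def_of_pos hα0, ← exp_log (pow_pos hn0 2), ← exp_add, exp_le_exp, log_pow]
  have := mul_le_mul_of_nonneg_left hgrowth hlα.le
  rw [mul_add, ← mul_assoc, mul_div_cancel₀ _ hlα.ne'] at this
  push_cast
  linarith

theorem stmt_10_general (α : ℝ) (hα : 1 < α) (f : ℕ → ℝ)
    (hfdef : ∀ n : ℕ, 1 ≤ n → f n = α ^ ((Real.log n) ^ ((3 : ℝ) / 2))) :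
    ¬ ∃ t : ℕ → ℝ, Monotone t ∧ (∀ n, 0 ≤ t n) ∧ (∀ C : ℝ, ∃ n, C < t n) ∧
      ∃ K M N : ℕ, 0 < K ∧ 0 < M ∧ 0 < N ∧
        ∀ n ≥ N, (n : ℝ) ^ 2 * f n * t n ≤ (K : ℝ) * f (M * n) := by
  rintro ⟨t, ht_mono, -, ht_unbdd, K, M, N, -, hM, -, hbound⟩
  obtain ⟨n₀, hn₀⟩ := ht_unbdd K
  obtain ⟨n, hnN, hn₀n, hn, hgrowth⟩ := ((eventually_ge_atTop N).and <|
    (eventually_ge_atTop n₀).and <| (eventually_ge_atTop 1).and <|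
      eventually_rpow_log_mul_le hα hM).exists
  rw [← hfdef n hn, ← hfdef (M * n) (Nat.one_le_iff_ne_zero.2 (by positivity))] at hgrowth
  have hpos : 0 < (n : ℝ) ^ 2 * f n := by
    rw [hfdef n hn]
    have : (0 : ℝ) < n := by exact_mod_cast hn
    positivity
  have htn : t n ≤ K := le_of_mul_le_mul_left (by
    calc (n : ℝ) ^ 2 * f n * t n ≤ K * f (M * n) := hbound n hnN
      _ ≤ K * ((n : ℝ) ^ 2 * f n) := by gcongr
      _ = (n : ℝ) ^ 2 * f n * K := mul_comm _ _) hpos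
  linarith [ht_mono hn₀n]

theorem stmt_10 (α : ℝ) (hα : 1 < α) (f : ℕ → ℝ)
    (hf0 : f 0 = 0)
    (hfdef : ∀ n : ℕ, 1 ≤ n → f n = α ^ ((Real.log n) ^ ((3 : ℝ) / 2))) :
    ¬ ∃ t : ℕ → ℝ, Monotone t ∧ (∀ n, 0 ≤ t n) ∧ (∀ C : ℝ, ∃ n, C < t n) ∧
      ∃ K M N : ℕ, 0 < K ∧ 0 < M ∧ 0 < N ∧
        ∀ n ≥ N, (n : ℝ) ^ 2 * f n * t n ≤ (K : ℝ) * f (M * n) :=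
  stmt_10_general α hα f hfdef
end

section
/- Let f ∈ 𝓕 be a non-zero function (f(n) > 0 for some n). If f is strongly-super-polynomial, i.e. (n ↦ n²·f(n)) ≪ f, then f is super-polynomial: lim_{n→∞} (log f(n))/(log n) = ∞, where log denotes the natural logarithm. -/
set_option maxHeartbeats 1000000 in
theorem stmt_11 (f : ℕ → ℝ)
    (hfmono : Monotone f) (hfnonneg : ∀ n, 0 ≤ f n) (hfnz : ∃ n, 0 < f n)
    (hssp : ∃ t : ℕ → ℝ, Monotone t ∧ (∀ n, 0 ≤ t n) ∧ (∀ C : ℝ, ∃ n, C < t n) ∧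
      ∃ K M N : ℕ, 0 < K ∧ 0 < M ∧ 0 < N ∧
        ∀ n ≥ N, (n : ℝ) ^ 2 * f n * t n ≤ (K : ℝ) * f (M * n)) :
    Filter.Tendsto (fun n : ℕ => Real.log (f n) / Real.log n)
      Filter.atTop Filter.atTop := by
  obtain ⟨t, htmono, htnonneg, htunb, K, M, N, hK, hMpos, hNpos, hkey⟩ := hssp
  obtain ⟨n₀, hn₀⟩ := hfnz
  obtain ⟨nt, hnt⟩ := htunb (K : ℝ)
  have hKR : (0:ℝ) < K := by exact_mod_cast hK
  -- M must be at least 2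
  have hM2 : 2 ≤ M := by
    by_contra hcon
    have hM1 : M = 1 := by omega
    subst hM1
    set n := max (max N n₀) (max nt 1) with hn
    have hnN : N ≤ n := le_trans (le_max_left _ _) (le_max_left _ _)
    have h := hkey n hnN
    rw [one_mul] at h
    have hfn : 0 < f n :=
      lt_of_lt_of_le hn₀ (hfmono (le_trans (le_max_right _ _) (le_max_left _ _)))
    have htn : (K:ℝ) < t n :=
      lt_of_lt_of_le hnt (htmono (le_trans (le_max_left _ _) (le_max_right _ _)))
    have hn1 : (1:ℝ) ≤ (n:ℕ) := by
      have h1 : 1 ≤ n := le_trans (le_max_right _ _) (le_max_right _ _)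
      exact_mod_cast h1
    have h1sq : (1:ℝ) ≤ ((n:ℕ):ℝ)^2 := by nlinarith
    nlinarith [mul_nonneg (mul_nonneg (sub_nonneg.2 h1sq) (hfnonneg n)) (htnonneg n),
      mul_pos hfn (sub_pos.2 htn)]
  have hMR : (0:ℝ) < M := by exact_mod_cast hMpos
  have hM1R : (1:ℝ) < M := by
    have : (2:ℝ) ≤ M := by exact_mod_cast hM2
    linarith
  set A := Real.log M with hAdef
  have hA : 0 < A := Real.log_pos hM1R
  set b := max (max N n₀) (max nt 2) with hbdef
  have hbN : N ≤ b := le_trans (le_max_left _ _) (le_max_left _ _)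
  have hb2 : 2 ≤ b := le_trans (le_max_right _ _) (le_max_right _ _)
  have hbpos : 0 < b := by omega
  have hfb : 0 < f b :=
    lt_of_lt_of_le hn₀ (hfmono (le_trans (le_max_right _ _) (le_max_left _ _)))
  have htb : (K:ℝ) ≤ t b :=
    le_of_lt (lt_of_lt_of_le hnt (htmono (le_trans (le_max_left _ _) (le_max_right _ _))))
  set B := Real.log b with hBdef
  have hB : 0 ≤ B := Real.log_nonneg (by exact_mod_cast Nat.one_le_of_lt hb2)
  set L := Real.log (f b) with hLdef
  clear_value A B
  -- step inequality
  have step : ∀ n, b ≤ n → ((n:ℕ):ℝ)^2 * f n ≤ f (M * n) := by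
    intro n hn
    have h1 := hkey n (le_trans hbN hn)
    have h2 : (K:ℝ) ≤ t n := le_trans htb (htmono hn)
    have h3 : (K:ℝ) * (((n:ℕ):ℝ)^2 * f n) ≤ (K:ℝ) * f (M * n) := by
      nlinarith [mul_nonneg (mul_nonneg (sq_nonneg ((n:ℕ):ℝ)) (hfnonneg n)) (sub_nonneg.2 h2)]
    exact le_of_mul_le_mul_left h3 hKR
  -- iterated growth
  have iter : ∀ k : ℕ, (M:ℝ)^(k*k) * f b ≤ (M:ℝ)^k * f (M^k * b) := by
    intro k
    induction k with
    | zero => simp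
    | succ k ih =>
      have hbk : b ≤ M^k * b := Nat.le_mul_of_pos_left b (pow_pos hMpos k)
      have hstep := step (M^k * b) hbk
      have hcast : ((M^k * b : ℕ):ℝ) = (M:ℝ)^k * (b:ℝ) := by push_cast; ring
      have hb1R : (1:ℝ) ≤ (b:ℝ) := by exact_mod_cast Nat.one_le_of_lt hb2
      have hMk : (0:ℝ) ≤ (M:ℝ)^k := by positivity
      have h1 : (M:ℝ)^(2*k) * f (M^k*b) ≤ f (M^(k+1)*b) := by
        have hsq : (M:ℝ)^(2*k) ≤ ((M^k * b : ℕ):ℝ)^2 := by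
          rw [hcast, two_mul, pow_add]
          have h5 : (1:ℝ) ≤ (b:ℝ)*(b:ℝ) := by nlinarith
          nlinarith [mul_le_mul_of_nonneg_left h5 (mul_nonneg hMk hMk)]
        have heq : M * (M^k * b) = M^(k+1) * b := by ring
        rw [heq] at hstep
        exact le_trans (mul_le_mul_of_nonneg_right hsq (hfnonneg _)) hstep
      have h2 : (M:ℝ)^k * ((M:ℝ)^(k*k) * f b) ≤ (M:ℝ)^k * ((M:ℝ)^k * f (M^k*b)) :=
        mul_le_mul_of_nonneg_left ih hMk
      have h3 : (M:ℝ)^k * (M:ℝ)^(k*k) * f b ≤ f (M^(k+1)*b) := by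
        have : (M:ℝ)^k * ((M:ℝ)^k * f (M^k*b)) = (M:ℝ)^(2*k) * f (M^k*b) := by
          rw [two_mul, pow_add]; ring
        calc (M:ℝ)^k * (M:ℝ)^(k*k) * f b = (M:ℝ)^k * ((M:ℝ)^(k*k) * f b) := by ring
          _ ≤ (M:ℝ)^k * ((M:ℝ)^k * f (M^k*b)) := h2
          _ = (M:ℝ)^(2*k) * f (M^k*b) := this
          _ ≤ f (M^(k+1)*b) := h1
      calc (M:ℝ)^((k+1)*(k+1)) * f b
          = (M:ℝ)^(k+1) * ((M:ℝ)^k * (M:ℝ)^(k*k) * f b) := by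
            rw [show (k+1)*(k+1) = (k+1) + (k + k*k) from by ring, pow_add, pow_add]; ring
        _ ≤ (M:ℝ)^(k+1) * f (M^(k+1)*b) :=
            mul_le_mul_of_nonneg_left h3 (by positivity)
  rw [Filter.tendsto_atTop]
  intro C
  set D := max C 1 with hDdef
  have hD1 : (1:ℝ) ≤ D := le_max_right _ _
  have hD0 : (0:ℝ) ≤ D := by linarith
  set E := D*A + D*B + |L| with hEdef
  have hE : 0 ≤ E := by
    have := abs_nonneg L
    have h1 : 0 ≤ D*A := mul_nonneg hD0 hA.le
    have h2 : 0 ≤ D*B := mul_nonneg hD0 hB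
    rw [hEdef]; linarith
  set c : ℝ := (D+2) + E/A with hcdef
  set k₀ := Nat.ceil c with hk₀def
  filter_upwards [Filter.eventually_ge_atTop (M^(k₀+1) * b)] with n hn
  have hnb : b ≤ n := le_trans (Nat.le_mul_of_pos_left b (pow_pos hMpos _)) hn
  set k := Nat.log M (n / b) with hkdef
  have hdivpos : 0 < n / b := Nat.div_pos hnb hbpos
  have hklow : M ^ k * b ≤ n := by
    calc M^k * b ≤ (n/b) * b :=
          Nat.mul_le_mul_right b (Nat.pow_log_le_self M hdivpos.ne')
      _ ≤ n := Nat.div_mul_le_self n b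
  have hkhigh : n < M^(k+1) * b := by
    have h1 : n / b < M^(k+1) := Nat.lt_pow_succ_log_self (by omega) (n/b)
    have h2 : n < (n/b + 1) * b := by
      have h3 := Nat.div_add_mod n b
      have h4 := Nat.mod_lt n hbpos
      nlinarith
    calc n < (n/b + 1) * b := h2
      _ ≤ M^(k+1) * b := Nat.mul_le_mul_right b h1
  have hk₀k : k₀ + 1 ≤ k := by
    have h1 : M^(k₀+1) ≤ n / b := (Nat.le_div_iff_mul_le hbpos).2 hn
    have h2 := Nat.log_mono_right (b := M) h1
    rwa [Nat.log_pow (by omega)] at h2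
  have hck : c ≤ (k:ℝ) := by
    refine le_trans (Nat.le_ceil c) ?_
    exact_mod_cast le_trans (Nat.le_succ k₀) hk₀k
  clear_value k
  have hfn : 0 < f n := lt_of_lt_of_le hfb (hfmono hnb)
  have hfk : 0 < f (M^k*b) :=
    lt_of_lt_of_le hfb (hfmono (Nat.le_mul_of_pos_left b (pow_pos hMpos k)))
  -- lower bound on log (f n)
  have hlogf : ((k:ℝ)*(k:ℝ)) * A - (k:ℝ)*A + L ≤ Real.log (f n) := by
    have h := iter k
    have hchain : (M:ℝ)^(k*k) * f b ≤ (M:ℝ)^k * f n :=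
      le_trans h (mul_le_mul_of_nonneg_left (hfmono hklow) (by positivity))
    have hlhs : 0 < (M:ℝ)^(k*k) * f b := by positivity
    have hlog := Real.log_le_log hlhs hchain
    rw [Real.log_mul (by positivity) (ne_of_gt hfb),
        Real.log_mul (by positivity) (ne_of_gt hfn),
        Real.log_pow, Real.log_pow] at hlog
    push_cast at hlog
    rw [hAdef, hLdef]
    linarith
  -- upper bound on log n
  have hnpos : 0 < n := by omega
  have hlogn : Real.log n ≤ ((k:ℝ)+1)*A + B := by
    have hcast : ((n:ℕ):ℝ) ≤ (M:ℝ)^(k+1) * (b:ℝ) := by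
      have : ((n:ℕ):ℝ) ≤ ((M^(k+1) * b : ℕ):ℝ) := by exact_mod_cast hkhigh.le
      rwa [Nat.cast_mul, Nat.cast_pow] at this
    have hlog := Real.log_le_log (by exact_mod_cast hnpos) hcast
    rw [Real.log_mul (by positivity) (by positivity), Real.log_pow] at hlog
    push_cast at hlog
    rw [hAdef, hBdef]
    linarith
  have hlognpos : 0 < Real.log n := by
    apply Real.log_pos
    have : 2 ≤ n := le_trans hb2 hnb
    exact_mod_cast Nat.lt_of_lt_of_le one_lt_two this
  -- arithmetic
  have hkD : D + 2 ≤ (k:ℝ) := by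
    have h1 : 0 ≤ E/A := div_nonneg hE hA.le
    rw [hcdef] at hck; linarith
  have hkA : (D+2)*A + E ≤ (k:ℝ)*A := by
    have h2 : (D+2)*A + E = c * A := by
      rw [hcdef]; field_simp
    rw [h2]
    exact mul_le_mul_of_nonneg_right hck hA.le
  have hfinal : D * Real.log n ≤ Real.log (f n) := by
    have h1 : D * Real.log n ≤ D * (((k:ℝ)+1)*A + B) :=
      mul_le_mul_of_nonneg_left hlogn hD0
    have hq : 0 ≤ ((k:ℝ) - (D+2)) * ((k:ℝ)*A) :=
      mul_nonneg (by linarith) (mul_nonneg (Nat.cast_nonneg k) hA.le)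
    rw [hEdef] at hkA
    nlinarith [neg_abs_le L, mul_nonneg (by linarith : (0:ℝ) ≤ D+2) hA.le]
  have := (le_div_iff₀ hlognpos).2 hfinal
  exact le_trans (le_max_left C 1) this
end

section
/- Let G be a group densely generated by a finite generating set X, and let π : F_X → G be the induced surjection from the free group F_X on X. Then there is no finite subset R ⊆ F_X whose normal closure in F_X equals the kernel of π; that is, G admits no finite presentation over X. -/
/-!
If `R` were a finite set of relators normally generating the kernel, every relation of `G` would be
a product of conjugates of elements of `R^{±1}`, whose reduced words have length at most
the maximal reduced length `M` of an element of `R`. Dense generation provides, for `n ≥ M`, a relation that cannot be written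
with relators of length `≤ n`.
-/

/-- A group `G` is densely generated by the (finite) family `x : ι → G` if there are
constants `1 ≤ E < F` and `N₀` so that for every `n ≥ N₀` there is a word `w` over
`x^{±1}` which evaluates to `1` in `G`, whose length lies in `[E*n, F*n]`, and such that
whenever the image of `w` in the free group is written as a product of conjugates
`ρ̄ᵢ ūᵢ ρ̄ᵢ⁻¹` of words `uᵢ` evaluating to `1` in `G`, some `uⱼ` has length `> n`. -/
def DenselyGeneratedBy {G : Type*} [Group G] {ι : Type*} (x : ι → G) : Prop :=
  ∃ E F N₀ : ℕ, 1 ≤ E ∧ E < F ∧ ∀ n ≥ N₀, ∃ w : List (ι × Bool),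
    FreeGroup.lift x (FreeGroup.mk w) = 1 ∧
    E * n ≤ w.length ∧ w.length ≤ F * n ∧
    ∀ (k : ℕ) (ρ u : Fin k → List (ι × Bool)),
      (∀ i, FreeGroup.lift x (FreeGroup.mk (u i)) = 1) →
      FreeGroup.mk w =
        (List.ofFn fun i =>
          FreeGroup.mk (ρ i) * FreeGroup.mk (u i) * (FreeGroup.mk (ρ i))⁻¹).prod →
      ∃ j, n < (u j).length

theorem Subgroup.exists_prod_conj_of_mem_normalClosure {G : Type*} [Group G] {S : Set G} {g : G}
    (hg : g ∈ Subgroup.normalClosure S) :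
    ∃ (k : ℕ) (c s : Fin k → G), (∀ i, s i ∈ S ∨ (s i)⁻¹ ∈ S) ∧
      g = (List.ofFn fun i => c i * s i * (c i)⁻¹).prod := by
  rw [Subgroup.normalClosure, ← Subgroup.mem_toSubmonoid, Subgroup.closure_toSubmonoid] at hg
  obtain ⟨l, hl, rfl⟩ := Submonoid.exists_list_of_mem_closure hg
  have hconj : ∀ i : Fin l.length, ∃ c s : G, (s ∈ S ∨ s⁻¹ ∈ S) ∧ l.get i = c * s * c⁻¹ := by
    intro i
    rcases hl _ (l.get_mem i) with h | h
    · obtain ⟨s, hs, hsy⟩ := Group.mem_conjugatesOfSet_iff.1 h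
      obtain ⟨c, hc⟩ := isConj_iff.1 hsy
      exact ⟨c, s, .inl hs, hc.symm⟩
    · obtain ⟨s, hs, hsy⟩ := Group.mem_conjugatesOfSet_iff.1 (Set.mem_inv.1 h)
      obtain ⟨c, hc⟩ := isConj_iff.1 hsy
      refine ⟨c, s⁻¹, .inr ((inv_inv s).symm ▸ hs), ?_⟩
      rw [← inv_inv (l.get i), ← hc]
      group
  choose c s hS hcs using hconj
  exact ⟨l.length, c, s, hS, by rw [← funext hcs, List.ofFn_get]⟩

namespace FreeGroup

theorem exists_prod_conj_short_relators_of_mem_normalClosure {ι G : Type*} [DecidableEq ι]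
    [Group G] {x : ι → G} {S : Set (FreeGroup ι)} {M : ℕ} (hS : ∀ r ∈ S, lift x r = 1)
    (hM : ∀ r ∈ S, r.norm ≤ M) {g : FreeGroup ι} (hg : g ∈ Subgroup.normalClosure S) :
    ∃ (k : ℕ) (ρ u : Fin k → List (ι × Bool)),
      (∀ i, lift x (mk (u i)) = 1) ∧ (∀ i, (u i).length ≤ M) ∧
      g = (List.ofFn fun i => mk (ρ i) * mk (u i) * (mk (ρ i))⁻¹).prod := by
  obtain ⟨k, c, s, hs, rfl⟩ := Subgroup.exists_prod_conj_of_mem_normalClosure hg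
  refine ⟨k, fun i => (c i).toWord, fun i => (s i).toWord, fun i => ?_, fun i => ?_, ?_⟩
  · rw [mk_toWord]
    rcases hs i with h | h
    · exact hS _ h
    · simpa using hS _ h
  · rcases hs i with h | h
    · exact hM _ h
    · exact norm_inv_eq.symm.trans_le (hM _ h)
  · simp only [mk_toWord]

end FreeGroup

theorem stmt_14_general {G : Type*} [Group G] {ι : Type*}
    (x : ι → G)
    (hdense : DenselyGeneratedBy x) :
    ¬ ∃ R : Finset (FreeGroup ι),
      Subgroup.normalClosure (R : Set (FreeGroup ι)) = (FreeGroup.lift x).ker := by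
  classical
  rintro ⟨R, hR⟩
  obtain ⟨E, F, N₀, -, -, hdense⟩ := hdense
  obtain ⟨w, hw, -, -, hmin⟩ := hdense (max N₀ (R.sup FreeGroup.norm)) (le_max_left _ _)
  have hwR : FreeGroup.mk w ∈ Subgroup.normalClosure (R : Set (FreeGroup ι)) := hR ▸ hw
  obtain ⟨k, ρ, u, hu, hlen, hprod⟩ :=
    FreeGroup.exists_prod_conj_short_relators_of_mem_normalClosure
      (fun r hr => hR ▸ Subgroup.subset_normalClosure hr) (fun r hr => R.le_sup hr) hwR
  obtain ⟨j, hj⟩ := hmin k ρ u hu hprod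
  exact (hj.trans_le (hlen j)).not_ge (le_max_right _ _)

theorem stmt_14 {G : Type*} [Group G] {ι : Type*} [Fintype ι]
    (x : ι → G) (hx : Subgroup.closure (Set.range x) = ⊤)
    (hdense : DenselyGeneratedBy x) :
    ¬ ∃ R : Finset (FreeGroup ι),
      Subgroup.normalClosure (R : Set (FreeGroup ι)) = (FreeGroup.lift x).ker :=
  stmt_14_general x hdense
end
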